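/- arXiv:2605.07277 — 6 statements merged into one kernel-verified Lean document; each statement's English description precedes it below -/
import Mathlib

section
/- For every fixed y ∈ Y, the priority nearest selector x ↦ P_y(x) is locally Lipschitz on K \ 𝒥_y. -/
open Filter Topology MeasureTheory Set Metric Bornology RealInnerProductSpace
open scoped ENNReal NNReal

noncomputable section

namespace Bif

abbrev Xs (d : ℕ) : Type := EuclideanSpace ℝ (Fin d)
abbrev Ys (m : ℕ) : Type := EuclideanSpace ℝ (Fin m)
abbrev Zs (m d : ℕ) : Type := WithLp 2 (Ys m × Xs d)

variable {d m n : ℕ}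

/-- The point `(y, x)` in `Y × ℝ^d` equipped with the product Euclidean (ℓ²) norm. -/
def ptYX (y : Ys m) (x : Xs d) : Zs m d := (WithLp.equiv 2 (Ys m × Xs d)).symm (y, x)

def projY (p : Zs m d) : Ys m := ((WithLp.equiv 2 (Ys m × Xs d)) p).1

def projX (p : Zs m d) : Xs d := ((WithLp.equiv 2 (Ys m × Xs d)) p).2

/-- `f` is locally Lipschitz on `s`: every point of `s` has a relative
neighborhood on which `f` is Lipschitz. -/
def LocLipOn {α β : Type*} [PseudoEMetricSpace α] [PseudoEMetricSpace β]
    (s : Set α) (f : α → β) : Prop :=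
  ∀ x ∈ s, ∃ C : NNReal, ∃ t ∈ 𝓝[s] x, LipschitzOnWith C f t

/-- The solution set `F(x) = {f_1(x), …, f_n(x)}`. -/
def Fset (f : Fin n → Xs d → Ys m) (x : Xs d) : Set (Ys m) :=
  Set.range fun i => f i x

/-- The reduced Voronoi switching set `Σ°(x)`. -/
def Sigma0 (f : Fin n → Xs d → Ys m) (x : Xs d) : Set (Ys m) :=
  {y | ∃ i j : Fin n, f i x ≠ f j x ∧ ‖y - f i x‖ = ‖y - f j x‖ ∧
        ∀ k, ‖y - f i x‖ ≤ ‖y - f k x‖}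

/-- The graph-closure switching set `Σ̃(x₀)`: the graph of `Σ̃` is the closure of
the graph of `Σ°` (over base points in `K`). -/
def SigmaTilde (K : Set (Xs d)) (f : Fin n → Xs d → Ys m) (x0 : Xs d) : Set (Ys m) :=
  {y | (x0, y) ∈ closure {p : Xs d × Ys m | p.1 ∈ K ∧ p.2 ∈ Sigma0 f p.1}}

/-- `x₀` has a stable collapse pattern: on a relative neighborhood `U ⊆ K` of `x₀`
there is a partition (equivalence relation) of the branch indices such that two
branches agree at a point of `U` iff they lie in the same cluster. -/
def StableAt (K : Set (Xs d)) (f : Fin n → Xs d → Ys m) (x0 : Xs d) : Prop :=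
  ∃ U ∈ 𝓝[K] x0, U ⊆ K ∧ ∃ R : Fin n → Fin n → Prop, Equivalence R ∧
    ∀ x ∈ U, ∀ i j : Fin n, (f i x = f j x ↔ R i j)

/-- The unstable collapse set `𝒰 = K \ S`. -/
def Unstable (K : Set (Xs d)) (f : Fin n → Xs d → Ys m) : Set (Xs d) :=
  {x ∈ K | ¬ StableAt K f x}

/-- `P` is the priority nearest selector: `P y x = f i x` where `i` is the
smallest index minimizing `‖y - f i x‖`. -/
def IsPrioritySelector (f : Fin n → Xs d → Ys m) (P : Ys m → Xs d → Ys m) : Prop :=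
  ∀ (y : Ys m) (x : Xs d), ∃ i : Fin n, P y x = f i x ∧
    (∀ j, ‖y - f i x‖ ≤ ‖y - f j x‖) ∧
    (∀ j, (∀ k, ‖y - f j x‖ ≤ ‖y - f k x‖) → i ≤ j)

/-- On `closure K \ K`, `f` takes the value of the limit of `f` along `K` when this
limit exists, and `0` otherwise (limit-or-zero extension of the branch maps). -/
def IsLimitExtension (K : Set (Xs d)) (f : Fin n → Xs d → Ys m) : Prop :=
  ∀ i : Fin n, ∀ x ∈ closure K \ K,
    Tendsto (f i) (𝓝[K] x) (𝓝 (f i x)) ∨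
    ((¬ ∃ L : Ys m, Tendsto (f i) (𝓝[K] x) (𝓝 L)) ∧ f i x = 0)

/-- `𝒟`: the points of `closure K` at which some (extended) branch fails to be
locally Lipschitz. -/
def DSet (K : Set (Xs d)) (f : Fin n → Xs d → Ys m) : Set (Xs d) :=
  {x ∈ closure K | ∃ i : Fin n,
    ¬ ∃ C : NNReal, ∃ t ∈ 𝓝[closure K] x, LipschitzOnWith C (f i) t}

/-- The joint bad set `ℬ ⊆ Y × closure K`. -/
def BadSet (K : Set (Xs d)) (f : Fin n → Xs d → Ys m) : Set (Zs m d) :=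
  {p | projX p ∈ DSet K f ∪ closure (Unstable K f) ∨ projY p ∈ SigmaTilde K f (projX p)}

/-- `ρ(y, x) = dist((y, x), ℬ)` in the product Euclidean norm. -/
def rhoB (K : Set (Xs d)) (f : Fin n → Xs d → Ys m) (y : Ys m) (x : Xs d) : ℝ :=
  Metric.infDist (ptYX y x) (BadSet K f)

/-- `ω(y, x) = ρ(y, x) / (1 + ρ(y, x))`. -/
def omegaB (K : Set (Xs d)) (f : Fin n → Xs d → Ys m) (y : Ys m) (x : Xs d) : ℝ :=
  rhoB K f y x / (1 + rhoB K f y x)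

/-- The safe tube `𝒮(R, s)`. -/
def STube (K : Set (Xs d)) (f : Fin n → Xs d → Ys m) (R s : ℝ) : Set (Ys m × Xs d) :=
  {q | q.2 ∈ closure K ∧ ‖q.1‖ ≤ R ∧ s ≤ omegaB K f q.1 q.2}

/-- The set whose supremum is the safe-set profile `H₁(R, s)`. -/
def H1set (K : Set (Xs d)) (f : Fin n → Xs d → Ys m) (P : Ys m → Xs d → Ys m)
    (R s : ℝ) : Set ℝ :=
  {r | ∃ y x z, (y, x) ∈ STube K f R s ∧ (y, z) ∈ STube K f R s ∧ x ≠ z ∧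
       r = ‖P y x - P y z‖ / ‖x - z‖}

/-- The set whose supremum is the safe-set profile `H₂(R, s)`. -/
def H2set (K : Set (Xs d)) (f : Fin n → Xs d → Ys m) (P : Ys m → Xs d → Ys m)
    (R s : ℝ) : Set ℝ :=
  {r | ∃ y x, (y, x) ∈ STube K f R s ∧ r = ‖P y x‖}

def H1 (K : Set (Xs d)) (f : Fin n → Xs d → Ys m) (P : Ys m → Xs d → Ys m) (R s : ℝ) : ℝ :=
  sSup (H1set K f P R s)

def H2 (K : Set (Xs d)) (f : Fin n → Xs d → Ys m) (P : Ys m → Xs d → Ys m) (R s : ℝ) : ℝ :=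
  sSup (H2set K f P R s)

/-- `λ_R(s) = 1 / (H₁(R, s) + H₂(R, s) + 1)`. -/
def lamB (K : Set (Xs d)) (f : Fin n → Xs d → Ys m) (P : Ys m → Xs d → Ys m)
    (R s : ℝ) : ℝ :=
  1 / (H1 K f P R s + H2 K f P R s + 1)

/-- `Θ_R(r) = ∫₀^r λ_R(s) ds`. -/
def ThetaB (K : Set (Xs d)) (f : Fin n → Xs d → Ys m) (P : Ys m → Xs d → Ys m)
    (R r : ℝ) : ℝ :=
  ∫ s in (0:ℝ)..r, lamB K f P R s

/-- The damping factor `η(y, x)`. -/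
def etaB (K : Set (Xs d)) (f : Fin n → Xs d → Ys m) (P : Ys m → Xs d → Ys m)
    (y : Ys m) (x : Xs d) : ℝ :=
  ThetaB K f P (1 + ‖y‖) (omegaB K f y x) /
    (1 + ThetaB K f P (1 + ‖y‖) (omegaB K f y x))

/-- The recurrent operator `g(y, x) = (1 − η(y, x)) y + η(y, x) P_y(x)`. -/
def gB (K : Set (Xs d)) (f : Fin n → Xs d → Ys m) (P : Ys m → Xs d → Ys m)
    (y : Ys m) (x : Xs d) : Ys m :=
  (1 - etaB K f P y x) • y + etaB K f P y x • P y x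

lemma key {m n : ℕ} (v : Fin n → Ys m) (y : Ys m) (r : ℝ) (hr : 0 < r)
    (hnt : ∀ y' : Ys m, dist y' y < r →
      ¬ ∃ i j : Fin n, v i ≠ v j ∧ ‖y' - v i‖ = ‖y' - v j‖ ∧ ∀ k, ‖y' - v i‖ ≤ ‖y' - v k‖)
    (i j : Fin n) (hi : ∀ k, ‖y - v i‖ ≤ ‖y - v k‖) :
    r * ‖v i - v j‖ ≤ ‖y - v j‖ ^ 2 - ‖y - v i‖ ^ 2 := by
  rcases eq_or_ne (v i) (v j) with heq | hne
  · rw [heq]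
    simp only [sub_self, norm_zero, mul_zero]
    have h := hi j
    nlinarith [norm_nonneg (y - v i), norm_nonneg (y - v j)]
  · set a := v i with ha
    set b := v j with hb
    have hab : ‖a - b‖ ≠ 0 := by
      simpa [sub_eq_zero] using hne
    have hab0 : 0 < ‖a - b‖ := lt_of_le_of_ne (norm_nonneg _) (Ne.symm hab)
    set u : Ys m := ‖a - b‖⁻¹ • (b - a) with hu
    have hun : ‖u‖ = 1 := by
      have h1 : ‖u‖ = ‖a - b‖⁻¹ * ‖b - a‖ := by
        rw [hu, norm_smul, Real.norm_eq_abs, abs_of_pos (by positivity)]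
      rw [h1, norm_sub_rev b a, inv_mul_cancel₀ hab]
    have hcont : ∀ c : Ys m, Continuous (fun t : ℝ => ‖y + t • u - c‖) :=
      fun c => ((continuous_const.add (continuous_id.smul continuous_const)).sub
        continuous_const).norm
    set S : Set ℝ := {t | t ∈ Icc 0 (r/2) ∧ ∀ k, ‖y + t • u - a‖ ≤ ‖y + t • u - v k‖} with hS
    have h0S : (0:ℝ) ∈ S := by
      refine ⟨⟨le_refl 0, by linarith⟩, fun k => ?_⟩
      simpa using hi k
    have hbdd : BddAbove S := ⟨r/2, fun t ht => ht.1.2⟩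
    have hScl : IsClosed S := by
      have hrw : S = Icc 0 (r/2) ∩ ⋂ k, {t : ℝ | ‖y + t • u - a‖ ≤ ‖y + t • u - v k‖} := by
        ext t; simp [hS, Set.mem_iInter]
      rw [hrw]
      exact isClosed_Icc.inter (isClosed_iInter fun k =>
        isClosed_le (hcont a) (hcont (v k)))
    set T := sSup S with hT
    have hTS : T ∈ S := hScl.csSup_mem ⟨0, h0S⟩ hbdd
    have hTr : T = r / 2 := by
      by_contra hne'
      have hTlt : T < r / 2 := lt_of_le_of_ne hTS.1.2 hne'
      have hdist : dist (y + T • u) y < r := by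
        rw [dist_eq_norm]
        simp only [add_sub_cancel_left]
        rw [norm_smul, hun, mul_one, Real.norm_eq_abs, abs_of_nonneg hTS.1.1]
        linarith
      have hev : ∀ k : Fin n, ∀ᶠ t in 𝓝 T, ‖y + t • u - a‖ ≤ ‖y + t • u - v k‖ := by
        intro k
        rcases eq_or_ne (v k) a with hk | hk
        · filter_upwards with t; rw [hk]
        · have hstrict : ‖y + T • u - a‖ < ‖y + T • u - v k‖ := by
            rcases lt_or_eq_of_le (hTS.2 k) with h | h
            · exact h
            · exact absurd ⟨i, k, (by rw [← ha]; exact hk.symm), h, hTS.2⟩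
                (hnt (y + T • u) hdist)
          have := ((hcont a).continuousAt (x := T)).eventually_lt
            ((hcont (v k)).continuousAt) hstrict
          filter_upwards [this] with t ht using le_of_lt ht
      have hall : ∀ᶠ t in 𝓝 T, ∀ k, ‖y + t • u - a‖ ≤ ‖y + t • u - v k‖ :=
        eventually_all.2 hev
      obtain ⟨η, hη, hball⟩ := Metric.eventually_nhds_iff.1 hall
      set t' := T + min η (r/2 - T) / 2 with ht'
      have hmin : 0 < min η (r/2 - T) := lt_min hη (by linarith)
      have ht'S : t' ∈ S := by
        refine ⟨⟨?_, ?_⟩, ?_⟩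
        · rw [ht']; linarith [hTS.1.1]
        · rw [ht']; have := min_le_right η (r/2 - T); linarith
        · apply hball
          rw [Real.dist_eq, ht']
          have h2 : T + min η (r/2 - T) / 2 - T = min η (r/2 - T) / 2 := by ring
          rw [h2, abs_of_pos (by linarith)]
          have := min_le_left η (r/2 - T); linarith
      have hle : t' ≤ T := le_csSup hbdd ht'S
      rw [ht'] at hle; linarith
    have hfin : ‖y + (r/2) • u - a‖ ≤ ‖y + (r/2) • u - b‖ := by
      have h := hTS.2 j; rwa [hTr] at h
    have hya : y + (r/2) • u - a = (y - a) + (r/2) • u := by abel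
    have hyb : y + (r/2) • u - b = (y - b) + (r/2) • u := by abel
    rw [hya, hyb] at hfin
    have hsq : ‖(y - a) + (r/2) • u‖ ^ 2 ≤ ‖(y - b) + (r/2) • u‖ ^ 2 :=
      pow_le_pow_left₀ (norm_nonneg _) hfin 2
    rw [norm_add_sq_real, norm_add_sq_real] at hsq
    have hinner_a : ⟪y - a, (r/2) • u⟫ = (r/2) * ⟪y - a, u⟫ := real_inner_smul_right _ _ _
    have hinner_b : ⟪y - b, (r/2) • u⟫ = (r/2) * ⟪y - b, u⟫ := real_inner_smul_right _ _ _
    have hsplit : ⟪y - b, u⟫ = ⟪y - a, u⟫ + ⟪a - b, u⟫ := by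
      rw [← inner_add_left]; congr 1; abel
    have habu : ⟪a - b, u⟫ = -‖a - b‖ := by
      rw [hu, real_inner_smul_right]
      have h3 : ⟪a - b, b - a⟫ = -(‖a - b‖ ^ 2) := by
        have h4 : b - a = -(a - b) := by abel
        rw [h4, inner_neg_right, real_inner_self_eq_norm_sq]
      rw [h3]
      field_simp
    rw [hinner_a, hinner_b, hsplit, habu] at hsq
    nlinarith [hsq]

/-- For every fixed `y`, the priority nearest selector
`x ↦ P_y(x)` is locally Lipschitz on `K \ 𝒥_y`. -/
theorem statement3 {d m n : ℕ}
    (K : Set (Xs d)) (hK : IsBounded K)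
    (f : Fin n → Xs d → Ys m) (hf : ∀ i, LocLipOn K (f i))
    (P : Ys m → Xs d → Ys m) (hP : IsPrioritySelector f P) :
    ∀ y : Ys m, LocLipOn (K \ {x | y ∈ SigmaTilde K f x}) (fun x => P y x) := by
  intro y x0 hx0
  classical
  -- Step 1: no ties near (x0, y)
  have hGc : (x0, y) ∈ (closure {p : Xs d × Ys m | p.1 ∈ K ∧ p.2 ∈ Sigma0 f p.1})ᶜ := hx0.2
  obtain ⟨r, hr, hballG⟩ := Metric.isOpen_iff.1 isClosed_closure.isOpen_compl _ hGc
  have hnoTie : ∀ x ∈ K, dist x x0 < r → ∀ y' : Ys m, dist y' y < r →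
      ¬ ∃ i j : Fin n, f i x ≠ f j x ∧ ‖y' - f i x‖ = ‖y' - f j x‖ ∧
        ∀ k, ‖y' - f i x‖ ≤ ‖y' - f k x‖ := by
    intro x hxK hdx y' hdy' hmem
    have hmemB : (x, y') ∈ Metric.ball (x0, y) r := by
      rw [Metric.mem_ball, Prod.dist_eq]
      exact max_lt hdx hdy'
    exact hballG hmemB (subset_closure ⟨hxK, hmem⟩)
  -- Step 2: common Lipschitz neighborhood
  have hfi := fun i => hf i x0 hx0.1
  choose C_ t_ ht_ hlip using hfi
  have hInter : (⋂ i, t_ i) ∈ 𝓝[K] x0 := by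
    rw [Filter.iInter_mem]; exact ht_
  obtain ⟨U, hUopen, hx0U, hUsub⟩ := mem_nhdsWithin.1 hInter
  obtain ⟨δ2, hδ2, hballU⟩ := Metric.isOpen_iff.1 hUopen _ hx0U
  set δ : ℝ := min δ2 r with hδdef
  have hδ : 0 < δ := lt_min hδ2 hr
  have hsubt : ∀ x, x ∈ K → dist x x0 < δ → ∀ i, x ∈ t_ i := by
    intro x hxK hxd i
    have : x ∈ U := hballU (by rw [Metric.mem_ball]; exact lt_of_lt_of_le hxd (min_le_left _ _))
    exact Set.mem_iInter.1 (hUsub ⟨this, hxK⟩) i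
  set C : NNReal := Finset.univ.sup C_ with hCdef
  have hC : ∀ i : Fin n, ∀ p, p ∈ K → dist p x0 < δ → ∀ q, q ∈ K → dist q x0 < δ →
      dist (f i p) (f i q) ≤ (C : ℝ) * dist p q := by
    intro i p hpK hpd q hqK hqd
    have h1 := (hlip i).dist_le_mul p (hsubt p hpK hpd i) q (hsubt q hqK hqd i)
    have h2 : (C_ i : ℝ) ≤ (C : ℝ) := by
      exact_mod_cast Finset.le_sup (Finset.mem_univ i)
    calc dist (f i p) (f i q) ≤ (C_ i : ℝ) * dist p q := h1
      _ ≤ (C : ℝ) * dist p q := by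
          exact mul_le_mul_of_nonneg_right h2 dist_nonneg
  -- index for the uniform bound
  obtain ⟨i0, -, -, -⟩ := hP y x0
  set B : ℝ := ‖y - f i0 x0‖ + (C : ℝ) * δ with hBdef
  have hx00 : dist x0 x0 < δ := by simpa using hδ
  have hBbound : ∀ x, x ∈ K → dist x x0 < δ → ∀ i : Fin n,
      (∀ k, ‖y - f i x‖ ≤ ‖y - f k x‖) → ‖y - f i x‖ ≤ B := by
    intro x hxK hxd i hmin
    have h1 : ‖y - f i0 x‖ ≤ ‖y - f i0 x0‖ + dist (f i0 x0) (f i0 x) := by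
      rw [← dist_eq_norm, ← dist_eq_norm]
      exact dist_triangle y (f i0 x0) (f i0 x)
    have h2 : dist (f i0 x0) (f i0 x) ≤ (C : ℝ) * dist x0 x := hC i0 x0 hx0.1 hx00 x hxK hxd
    have h3 : (C : ℝ) * dist x0 x ≤ (C : ℝ) * δ :=
      mul_le_mul_of_nonneg_left (by rw [dist_comm]; exact hxd.le) C.coe_nonneg
    calc ‖y - f i x‖ ≤ ‖y - f i0 x‖ := hmin i0
      _ ≤ B := by rw [hBdef]; linarith
  -- the Lipschitz constant
  set L : ℝ := 2 * (C : ℝ) * (2 * B + 4 * (C : ℝ) * δ) / r + (C : ℝ) with hLdef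
  refine ⟨L.toNNReal, (K \ {x | y ∈ SigmaTilde K f x}) ∩ Metric.ball x0 δ, ?_, ?_⟩
  · rw [mem_nhdsWithin_iff]
    exact ⟨δ, hδ, fun p hp => ⟨hp.2, hp.1⟩⟩
  · apply LipschitzOnWith.of_dist_le_mul
    intro x hx z hz
    have hxK : x ∈ K := hx.1.1
    have hzK : z ∈ K := hz.1.1
    have hxd : dist x x0 < δ := Metric.mem_ball.1 hx.2
    have hzd : dist z x0 < δ := Metric.mem_ball.1 hz.2
    obtain ⟨i, hPx, hminx, -⟩ := hP y x
    obtain ⟨j, hPz, hminz, -⟩ := hP y z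
    -- near-minimality of branch j at x
    have hfj : dist (f j x) (f j z) ≤ (C : ℝ) * dist x z := hC j x hxK hxd z hzK hzd
    have hfi : dist (f i x) (f i z) ≤ (C : ℝ) * dist x z := hC i x hxK hxd z hzK hzd
    have hnear : ‖y - f j x‖ ≤ ‖y - f i x‖ + 2 * (C : ℝ) * dist x z := by
      have t1 : ‖y - f j x‖ ≤ ‖y - f j z‖ + dist (f j z) (f j x) := by
        rw [← dist_eq_norm, ← dist_eq_norm]
        exact dist_triangle y (f j z) (f j x)
      have t2 : ‖y - f j z‖ ≤ ‖y - f i z‖ := hminz i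
      have t3 : ‖y - f i z‖ ≤ ‖y - f i x‖ + dist (f i x) (f i z) := by
        rw [← dist_eq_norm, ← dist_eq_norm]
        exact dist_triangle y (f i x) (f i z)
      have t4 : dist (f j z) (f j x) ≤ (C : ℝ) * dist x z := by
        rw [dist_comm]; exact hfj
      linarith
    -- apply the key lemma at x
    have hkey := key (fun k => f k x) y r hr
      (fun y' hy' => hnoTie x hxK (lt_of_lt_of_le hxd (min_le_right _ _)) y' hy')
      i j hminx
    -- bounds
    have hBx : ‖y - f i x‖ ≤ B := hBbound x hxK hxd i hminx
    have hdxz : dist x z ≤ 2 * δ := by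
      have := dist_triangle x x0 z
      rw [dist_comm x0 z] at this
      linarith
    have hC0 : (0:ℝ) ≤ (C : ℝ) := C.coe_nonneg
    have hBjx : ‖y - f j x‖ ≤ B + 2 * (C : ℝ) * dist x z := by linarith
    have hge : ‖y - f i x‖ ≤ ‖y - f j x‖ := hminx j
    have hfac : ‖y - f j x‖ ^ 2 - ‖y - f i x‖ ^ 2 ≤
        (2 * (C : ℝ) * dist x z) * (2 * B + 4 * (C : ℝ) * δ) := by
      have e1 : ‖y - f j x‖ ^ 2 - ‖y - f i x‖ ^ 2 =
          (‖y - f j x‖ - ‖y - f i x‖) * (‖y - f j x‖ + ‖y - f i x‖) := by ring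
      rw [e1]
      have d0 : (0:ℝ) ≤ dist x z := dist_nonneg
      have hA : ‖y - f j x‖ - ‖y - f i x‖ ≤ 2 * (C : ℝ) * dist x z := by linarith
      have hA0 : (0:ℝ) ≤ ‖y - f j x‖ - ‖y - f i x‖ := by linarith
      have hSsum : ‖y - f j x‖ + ‖y - f i x‖ ≤ 2 * B + 4 * (C : ℝ) * δ := by nlinarith
      have hSsum0 : (0:ℝ) ≤ ‖y - f j x‖ + ‖y - f i x‖ := by positivity
      exact mul_le_mul hA hSsum hSsum0 (by positivity)
    have hab : ‖f i x - f j x‖ ≤ 2 * (C : ℝ) * (2 * B + 4 * (C : ℝ) * δ) / r * dist x z := by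
      rw [div_mul_eq_mul_div, le_div_iff₀ hr]
      calc ‖f i x - f j x‖ * r = r * ‖f i x - f j x‖ := by ring
        _ ≤ ‖y - f j x‖ ^ 2 - ‖y - f i x‖ ^ 2 := hkey
        _ ≤ (2 * (C : ℝ) * dist x z) * (2 * B + 4 * (C : ℝ) * δ) := hfac
        _ = 2 * (C : ℝ) * (2 * B + 4 * (C : ℝ) * δ) * dist x z := by ring
    -- conclude
    have hfinal : dist (P y x) (P y z) ≤ L * dist x z := by
      rw [hPx, hPz]
      have t5 : dist (f i x) (f j z) ≤ dist (f i x) (f j x) + dist (f j x) (f j z) :=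
        dist_triangle _ _ _
      have t6 : dist (f i x) (f j x) = ‖f i x - f j x‖ := dist_eq_norm _ _
      rw [hLdef]
      have := hfj
      rw [t6] at t5
      linarith [hab, t5, this]
    calc dist (P y x) (P y z) ≤ L * dist x z := hfinal
      _ ≤ (L.toNNReal : ℝ) * dist x z :=
          mul_le_mul_of_nonneg_right (Real.le_coe_toNNReal L) dist_nonneg


end Bif
end
end

section
/- The set 𝒟 is closed in K̄, and 𝒟 ⊂ K̄ \ K (i.e. 𝒟 contains no point of K itself). -/
open Filter Topology MeasureTheory Set Metric Bornology RealInnerProductSpace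
open scoped ENNReal NNReal

noncomputable section

namespace Bif

variable {d m n : ℕ}

open scoped Uniformity in
private lemma exists_tendsto_of_lipOn {α β : Type*} [PseudoEMetricSpace α] [EMetricSpace β]
    [CompleteSpace β] {g : α → β} {C : NNReal} {t : Set α} (h : LipschitzOnWith C g t)
    {z : α} (hz : z ∈ closure t) : ∃ L, Tendsto g (𝓝[t] z) (𝓝 L) := by
  have hne : (𝓝[t] z).NeBot := mem_closure_iff_nhdsWithin_neBot.1 hz
  have hcl : Cauchy (𝓝[t] z) := cauchy_nhds.mono nhdsWithin_le_nhds
  refine cauchy_map_iff_exists_tendsto.1 ⟨hne.map _, ?_⟩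
  have h1 : (𝓝[t] z) ×ˢ (𝓝[t] z) ≤ 𝓤 α ⊓ 𝓟 (t ×ˢ t) :=
    le_inf hcl.2 (le_principal_iff.2 (prod_mem_prod self_mem_nhdsWithin self_mem_nhdsWithin))
  calc map g (𝓝[t] z) ×ˢ map g (𝓝[t] z)
      = map (fun p : α × α => (g p.1, g p.2)) ((𝓝[t] z) ×ˢ (𝓝[t] z)) := prod_map_map_eq
    _ ≤ map (fun p : α × α => (g p.1, g p.2)) (𝓤 α ⊓ 𝓟 (t ×ˢ t)) := map_mono h1
    _ ≤ 𝓤 β := h.uniformContinuousOn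

private lemma lip_closure {d m n : ℕ} {K : Set (Xs d)} {f : Fin n → Xs d → Ys m}
    (hext : IsLimitExtension K f) (i : Fin n) {x : Xs d} (hx : x ∈ K)
    (hloc : ∃ C : NNReal, ∃ t ∈ 𝓝[K] x, LipschitzOnWith C (f i) t) :
    ∃ C : NNReal, ∃ t ∈ 𝓝[closure K] x, LipschitzOnWith C (f i) t := by
  obtain ⟨C, t, ht, hLip⟩ := hloc
  obtain ⟨U, hUo, hxU, hUt⟩ := mem_nhdsWithin.1 ht
  set B := U ∩ K with hB
  have hLipB : LipschitzOnWith C (f i) B := hLip.mono hUt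
  have key : ∀ z ∈ closure K ∩ U, Tendsto (f i) (𝓝[B] z) (𝓝 (f i z)) ∧ (𝓝[B] z).NeBot := by
    rintro z ⟨hzc, hzU⟩
    have hzB : z ∈ closure B := hUo.inter_closure ⟨hzU, hzc⟩
    have hne : (𝓝[B] z).NeBot := mem_closure_iff_nhdsWithin_neBot.1 hzB
    have hKB : 𝓝[K] z = 𝓝[B] z := by
      rw [hB, Set.inter_comm]
      exact (nhdsWithin_inter_of_mem' (mem_nhdsWithin_of_mem_nhds (hUo.mem_nhds hzU))).symm
    by_cases hzK : z ∈ K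
    · exact ⟨hLipB.continuousOn z ⟨hzU, hzK⟩, hne⟩
    · obtain ⟨L, hL⟩ := exists_tendsto_of_lipOn hLipB hzB
      have hLK : Tendsto (f i) (𝓝[K] z) (𝓝 L) := by rw [hKB]; exact hL
      rcases hext i z ⟨hzc, hzK⟩ with h1 | h2
      · rw [hKB] at h1; exact ⟨h1, hne⟩
      · exact absurd ⟨L, hLK⟩ h2.1
  refine ⟨C, closure K ∩ U, mem_nhdsWithin.2 ⟨U, hUo, hxU, fun y hy => ⟨hy.2, hy.1⟩⟩, ?_⟩
  rw [lipschitzOnWith_iff_dist_le_mul]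
  intro p hp q hq
  obtain ⟨hp1, hpne⟩ := key p hp
  obtain ⟨hq1, hqne⟩ := key q hq
  haveI := hpne; haveI := hqne
  refine le_of_tendsto_of_tendsto ((hp1.comp tendsto_fst).dist (hq1.comp tendsto_snd))
    (((tendsto_fst.mono_right nhdsWithin_le_nhds).dist
      (tendsto_snd.mono_right nhdsWithin_le_nhds)).const_mul (C : ℝ)) ?_
  filter_upwards [prod_mem_prod self_mem_nhdsWithin self_mem_nhdsWithin] with w hw
  exact lipschitzOnWith_iff_dist_le_mul.1 hLipB _ hw.1 _ hw.2

/-- The set `𝒟` is closed in `closure K`, and `𝒟 ⊆ closure K \ K`. -/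
theorem statement6 {d m n : ℕ}
    (K : Set (Xs d)) (hK : IsBounded K)
    (f : Fin n → Xs d → Ys m) (hf : ∀ i, LocLipOn K (f i))
    (hext : IsLimitExtension K f) :
    IsClosed (DSet K f) ∧ DSet K f ⊆ closure K \ K := by
  constructor
  · rw [← isOpen_compl_iff, isOpen_iff_mem_nhds]
    intro x hx
    by_cases hxc : x ∈ closure K
    · have hall : ∀ i : Fin n, ∃ C : NNReal, ∃ t ∈ 𝓝[closure K] x,
          LipschitzOnWith C (f i) t :=
        fun i => not_not.1 fun hni => hx ⟨hxc, i, hni⟩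
      choose C t ht hLip using hall
      choose U hUo hxU hUsub using fun i => mem_nhdsWithin.1 (ht i)
      refine Filter.mem_of_superset
        ((isOpen_iInter_of_finite hUo).mem_nhds (Set.mem_iInter.2 hxU)) ?_
      rintro y hy ⟨hyc, i, hni⟩
      exact hni ⟨C i, t i,
        mem_nhdsWithin.2 ⟨U i, hUo i, Set.mem_iInter.1 hy i, hUsub i⟩, hLip i⟩
    · exact Filter.mem_of_superset (isClosed_closure.isOpen_compl.mem_nhds hxc)
        fun y hy hyD => hy hyD.1
  · rintro x ⟨hxc, i, hni⟩
    exact ⟨hxc, fun hxK => hni (lip_closure hext i hxK (hf i x hxK))⟩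

end Bif
end
end

section
/- The joint nearest selector P(y, x) := P_y(x) is locally Lipschitz on (Y × K̄) \ ℬ. -/
/-!
Fix a point `(y₀, x₀)` off the bad set. Near `x₀` all branches are `L`-Lipschitz on `closure K`,
and for `x ∈ K` near `x₀` the switching set `Σ°(x)` stays at distance `≥ r` from `y₀`.

The heart of the argument is a quantitative separation of Voronoi cells in a Euclidean space.
Let `y` be at distance `≥ ρ` from the switching set of finitely many points `g k`, let `g k₀` be
nearest to `y`, and let `g i ≠ g k₀`. Moving `y` straight in the direction `g i - g k₀`, the
difference of squared distances to `g i` and to `g k₀` decreases linearly, so before it vanishes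
the point `g k₀` ties with some other value: a point of the switching set. This tie point is at
distance `≥ ρ`, whence `‖g i - g k₀‖ ρ ≤ D (‖y - g i‖ - ‖y - g k₀‖)`, `D` bounding the distances.
Written with the excess over the nearest distance in place of `‖y - g i‖ - ‖y - g k₀‖`, both
sides are continuous in `x` for `g = (f · x)`, so the estimate passes from `K` to `closure K`.

The branch selected at `(y, x)` is nearly nearest at a nearby `(y', x')`, with excess
`O(dist)`; by the estimate its value is then `O(dist)` away from the branch selected there.
-/

open Filter Topology MeasureTheory Set Metric Bornology RealInnerProductSpace
open scoped ENNReal NNReal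

noncomputable section

namespace Bif

variable {d m n : ℕ}

section Voronoi

variable {E ι : Type*} [NormedAddCommGroup E]

def switchingSet (g : ι → E) : Set E :=
  {z | ∃ i j, g i ≠ g j ∧ ‖z - g i‖ = ‖z - g j‖ ∧ ∀ k, ‖z - g i‖ ≤ ‖z - g k‖}

section NearestDist

variable [Fintype ι] [Nonempty ι]

def nearestDist (g : ι → E) (y : E) : ℝ :=
  Finset.univ.inf' Finset.univ_nonempty fun k => ‖y - g k‖

lemma nearestDist_le (g : ι → E) (y : E) (k : ι) : nearestDist g y ≤ ‖y - g k‖ :=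
  Finset.inf'_le _ (Finset.mem_univ k)

lemma exists_norm_sub_eq_nearestDist (g : ι → E) (y : E) : ∃ k, ‖y - g k‖ = nearestDist g y := by
  obtain ⟨k, -, hk⟩ := Finset.exists_mem_eq_inf' Finset.univ_nonempty fun k => ‖y - g k‖
  exact ⟨k, hk.symm⟩

lemma nearestDist_eq_of_forall_le {g : ι → E} {y : E} {j : ι} (hj : ∀ k, ‖y - g j‖ ≤ ‖y - g k‖) :
    nearestDist g y = ‖y - g j‖ :=
  (nearestDist_le g y j).antisymm (Finset.le_inf' _ _ fun k _ => hj k)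

lemma continuousOn_nearestDist {X : Type*} [TopologicalSpace X] {f : ι → X → E} {s : Set X}
    (hf : ∀ k, ContinuousOn (f k) s) (y : E) :
    ContinuousOn (fun x => nearestDist (f · x) y) s :=
  ContinuousOn.finset_inf'_apply _ fun k _ => (continuousOn_const.sub (hf k)).norm

lemma norm_sub_sub_nearestDist_le {g g' : ι → E} {y y' : E} {j : ι}
    (hj : ∀ k, ‖y - g j‖ ≤ ‖y - g k‖) {ε δ : ℝ} (hy : ‖y - y'‖ ≤ ε)
    (hg : ∀ k, ‖g k - g' k‖ ≤ δ) :
    ‖y' - g' j‖ - nearestDist g' y' ≤ 2 * (ε + δ) := by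
  obtain ⟨k, hk⟩ := exists_norm_sub_eq_nearestDist g' y'
  have hj' : ‖y' - g' j‖ ≤ ‖y - y'‖ + ‖y - g j‖ + ‖g j - g' j‖ := by
    calc ‖y' - g' j‖ = ‖-(y - y') + (y - g j) + (g j - g' j)‖ := by congr 1; abel
      _ ≤ _ := (norm_add₃_le).trans_eq (by rw [norm_neg])
  have hk' : ‖y - g k‖ ≤ ‖y - y'‖ + ‖y' - g' k‖ + ‖g k - g' k‖ := by
    calc ‖y - g k‖ = ‖(y - y') + (y' - g' k) - (g k - g' k)‖ := by congr 1; abel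
      _ ≤ ‖(y - y') + (y' - g' k)‖ + ‖g k - g' k‖ := norm_sub_le _ _
      _ ≤ _ := by gcongr; exact norm_add_le _ _
  linarith [hj k, hg j, hg k]

end NearestDist

variable [InnerProductSpace ℝ E]

lemma norm_sub_sq_sub_norm_sub_sq_add_smul (y a b : E) (t : ℝ) :
    ‖y + t • (a - b) - a‖ ^ 2 - ‖y + t • (a - b) - b‖ ^ 2
      = ‖y - a‖ ^ 2 - ‖y - b‖ ^ 2 - 2 * t * ‖a - b‖ ^ 2 := by
  have ha : y + t • (a - b) - a = (y - a) + t • (a - b) := by abel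
  have hb : y + t • (a - b) - b = (y - b) + t • (a - b) := by abel
  have hab : ⟪y - a, a - b⟫ - ⟪y - b, a - b⟫ = -‖a - b‖ ^ 2 := by
    rw [← inner_sub_left, show y - a - (y - b) = -(a - b) by abel, inner_neg_left,
      real_inner_self_eq_norm_sq]
  rw [ha, hb, norm_add_sq_real, norm_add_sq_real, real_inner_smul_right, real_inner_smul_right]
  linear_combination 2 * t * hab

theorem norm_sub_mul_le_of_le_dist_switchingSet [Fintype ι] (g : ι → E) {y : E} {k₀ : ι}
    {ρ D : ℝ} (hmin : ∀ k, ‖y - g k₀‖ ≤ ‖y - g k‖) (hD : ∀ k, ‖y - g k‖ ≤ D)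
    (hsep : ∀ z ∈ switchingSet g, ρ ≤ dist z y) (i : ι) :
    ‖g i - g k₀‖ * ρ ≤ D * (‖y - g i‖ - ‖y - g k₀‖) := by
  classical
  rcases eq_or_ne (g i) (g k₀) with hik | hik
  · rw [hik, sub_self, norm_zero, zero_mul, sub_self, mul_zero]
  set v := g i - g k₀
  have hv : 0 < ‖v‖ := norm_pos_iff.2 (sub_ne_zero.2 hik)
  set z : ℝ → E := fun t => y + t • v
  set T := (‖y - g i‖ ^ 2 - ‖y - g k₀‖ ^ 2) / (2 * ‖v‖ ^ 2)
  have hT : 0 ≤ T := div_nonneg (by nlinarith [hmin i, norm_nonneg (y - g k₀)]) (by positivity)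
  have htie : ‖z T - g i‖ = ‖z T - g k₀‖ := by
    refine (sq_eq_sq₀ (norm_nonneg _) (norm_nonneg _)).1 (sub_eq_zero.1 ?_)
    rw [norm_sub_sq_sub_norm_sub_sq_add_smul]
    have hv0 : ‖g i - g k₀‖ ≠ 0 := hv.ne'
    simp only [T, v]
    field_simp
    ring
  set R := Finset.univ.filter fun k => g k ≠ g k₀
  have hmemR : ∀ k, g k ≠ g k₀ → k ∈ R := fun k hk => Finset.mem_filter.2 ⟨Finset.mem_univ k, hk⟩
  have hR : R.Nonempty := ⟨i, hmemR i hik⟩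
  -- `ψ t ≥ 0` says that `g k₀` is still a nearest value at `z t`
  set ψ : ℝ → ℝ := fun t => R.inf' hR (fun k => ‖z t - g k‖) - ‖z t - g k₀‖
  have hψ : Continuous ψ := by fun_prop
  have hψ0 : 0 ≤ ψ 0 := sub_nonneg.2 (Finset.le_inf' _ _ fun k _ => by simpa [z] using hmin k)
  have hψT : ψ T ≤ 0 :=
    sub_nonpos.2 ((Finset.inf'_le _ (hmemR i hik)).trans_eq htie)
  obtain ⟨t, ⟨ht0, htT⟩, hψt⟩ := intermediate_value_Icc' hT hψ.continuousOn ⟨hψT, hψ0⟩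
  obtain ⟨k, hkR, hk⟩ := Finset.exists_mem_eq_inf' hR fun k => ‖z t - g k‖
  have hzt : z t ∈ switchingSet g := by
    refine ⟨k₀, k, (Finset.mem_filter.1 hkR).2.symm, by linarith, fun k' => ?_⟩
    by_cases hk' : g k' = g k₀
    · rw [hk']
    · linarith [Finset.inf'_le (fun k => ‖z t - g k‖) (hmemR k' hk')]
  have hdist : dist (z t) y = t * ‖v‖ := by
    simp [z, dist_eq_norm, norm_smul, abs_of_nonneg ht0]
  have hρ : ρ ≤ T * ‖v‖ := (hsep _ hzt).trans (hdist ▸ mul_le_mul_of_nonneg_right htT hv.le)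
  calc ‖v‖ * ρ ≤ ‖v‖ * (T * ‖v‖) := mul_le_mul_of_nonneg_left hρ hv.le
    _ = (‖y - g i‖ - ‖y - g k₀‖) * ((‖y - g i‖ + ‖y - g k₀‖) / 2) := by
        simp only [T]; field_simp; ring
    _ ≤ (‖y - g i‖ - ‖y - g k₀‖) * D :=
        mul_le_mul_of_nonneg_left (by linarith [hD i, hD k₀]) (sub_nonneg.2 (hmin i))
    _ = D * (‖y - g i‖ - ‖y - g k₀‖) := mul_comm _ _

theorem norm_sub_mul_le_gap_add_gap [Fintype ι] [Nonempty ι] (g : ι → E) {y : E} {ρ D : ℝ}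
    (hρ : 0 ≤ ρ) (hD : ∀ k, ‖y - g k‖ ≤ D) (hsep : ∀ z ∈ switchingSet g, ρ ≤ dist z y)
    (i j : ι) :
    ‖g i - g j‖ * ρ ≤ D * ((‖y - g i‖ - nearestDist g y) + (‖y - g j‖ - nearestDist g y)) := by
  obtain ⟨k₀, hk₀⟩ := exists_norm_sub_eq_nearestDist g y
  have hmin : ∀ k, ‖y - g k₀‖ ≤ ‖y - g k‖ := fun k => hk₀ ▸ nearestDist_le g y k
  have hi := norm_sub_mul_le_of_le_dist_switchingSet g hmin hD hsep i
  have hj := norm_sub_mul_le_of_le_dist_switchingSet g hmin hD hsep j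
  calc ‖g i - g j‖ * ρ ≤ (‖g i - g k₀‖ + ‖g j - g k₀‖) * ρ := by
        gcongr
        exact (norm_sub_le_norm_sub_add_norm_sub _ (g k₀) _).trans_eq (by rw [norm_sub_rev (g k₀)])
    _ ≤ _ := by rw [← hk₀, add_mul, mul_add]; exact add_le_add hi hj

end Voronoi

section Local

variable {X E ι : Type*}

lemma exists_lipschitzOnWith_forall_of_finite [PseudoEMetricSpace X] [PseudoEMetricSpace E]
    [Finite ι] {f : ι → X → E} {s : Set X} {x : X}
    (h : ∀ i, ∃ C : ℝ≥0, ∃ t ∈ 𝓝[s] x, LipschitzOnWith C (f i) t) :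
    ∃ C : ℝ≥0, ∃ t ∈ 𝓝[s] x, ∀ i, LipschitzOnWith C (f i) t := by
  choose C t ht hC using h
  have := Fintype.ofFinite ι
  exact ⟨Finset.univ.sup C, ⋂ i, t i, iInter_mem.2 ht, fun i =>
    ((hC i).mono (iInter_subset t i)).weaken (Finset.le_sup (Finset.mem_univ i))⟩

variable [PseudoMetricSpace X] [NormedAddCommGroup E] [InnerProductSpace ℝ E]
  [Fintype ι] [Nonempty ι]

theorem exists_norm_sub_mul_le_gap {f : ι → X → E} {K : Set X} {x₀ : X} {y₀ : E} {r : ℝ}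
    {L : ℝ≥0} (hx₀ : x₀ ∈ closure K) (hr : 0 < r)
    (hLip : ∀ i, LipschitzOnWith L (f i) (closure K ∩ ball x₀ r))
    (hsep : ∀ x ∈ ball x₀ r ∩ K, ∀ z ∈ switchingSet (f · x), r ≤ dist z y₀) :
    ∃ D, 0 ≤ D ∧ ∀ x ∈ closure K ∩ ball x₀ r, ∀ y ∈ ball y₀ (r / 2), ∀ i j,
      ‖f i x - f j x‖ * (r / 2) ≤
        D * ((‖y - f i x‖ - nearestDist (f · x) y) + (‖y - f j x‖ - nearestDist (f · x) y)) := by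
  have hx₀' : x₀ ∈ closure K ∩ ball x₀ r := ⟨hx₀, mem_ball_self hr⟩
  set D := ∑ k, ‖y₀ - f k x₀‖ + r / 2 + L * r
  have hD : ∀ x ∈ closure K ∩ ball x₀ r, ∀ y ∈ ball y₀ (r / 2), ∀ k, ‖y - f k x‖ ≤ D := by
    intro x hx y hy k
    have hfk : ‖f k x₀ - f k x‖ ≤ L * r := by
      rw [← dist_eq_norm, dist_comm]
      exact ((hLip k).dist_le_mul x hx x₀ hx₀').trans
        (mul_le_mul_of_nonneg_left (mem_ball.1 hx.2).le L.2)
    calc ‖y - f k x‖ = ‖(y - y₀) + (y₀ - f k x₀) + (f k x₀ - f k x)‖ := by congr 1; abel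
      _ ≤ ‖y - y₀‖ + ‖y₀ - f k x₀‖ + ‖f k x₀ - f k x‖ := norm_add₃_le
      _ ≤ r / 2 + ∑ k, ‖y₀ - f k x₀‖ + L * r := by
          gcongr
          · exact (mem_ball_iff_norm.1 hy).le
          · exact Finset.single_le_sum (f := fun k => ‖y₀ - f k x₀‖) (fun k _ => norm_nonneg _)
              (Finset.mem_univ k)
      _ = D := by ring
  refine ⟨D, by positivity, fun x hx y hy i j => ?_⟩
  have hsub : ball x₀ r ∩ K ⊆ closure K ∩ ball x₀ r := fun x' hx' => ⟨subset_closure hx'.2, hx'.1⟩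
  have hK : ∀ x' ∈ ball x₀ r ∩ K, ‖f i x' - f j x'‖ * (r / 2) ≤
      D * ((‖y - f i x'‖ - nearestDist (f · x') y) + (‖y - f j x'‖ - nearestDist (f · x') y)) := by
    refine fun x' hx' => norm_sub_mul_le_gap_add_gap _ (by positivity) (hD x' (hsub hx') y hy)
      (fun z hz => ?_) i j
    linarith [hsep x' hx' z hz, dist_triangle z y y₀, mem_ball.1 hy]
  have hcont : ∀ k, ContinuousOn (f k) (closure K ∩ ball x₀ r) := fun k => (hLip k).continuousOn
  have hnear := continuousOn_nearestDist hcont y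
  refine ContinuousWithinAt.closure_le (isOpen_ball.inter_closure ⟨hx.2, hx.1⟩) ?_ ?_ hK
  · exact ((((hcont i).sub (hcont j)).norm.mul continuousOn_const) x hx).mono hsub
  · exact ((continuousOn_const.mul ((((continuousOn_const.sub (hcont i)).norm.sub hnear).add
      ((continuousOn_const.sub (hcont j)).norm.sub hnear)))) x hx).mono hsub

end Local

lemma dist_projY_le (a b : Zs m d) : dist (projY a) (projY b) ≤ dist a b :=
  WithLp.dist_fst_le a b

lemma dist_projX_le (a b : Zs m d) : dist (projX a) (projX b) ≤ dist a b :=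
  WithLp.dist_snd_le a b

lemma exists_lipschitzOnWith_ball_of_notMem_DSet {K : Set (Xs d)} {f : Fin n → Xs d → Ys m}
    {x₀ : Xs d} (hx₀ : x₀ ∈ closure K) (h : x₀ ∉ DSet K f) :
    ∃ L : ℝ≥0, ∃ r > 0, ∀ i, LipschitzOnWith L (f i) (closure K ∩ ball x₀ r) := by
  obtain ⟨L, t, ht, hL⟩ := exists_lipschitzOnWith_forall_of_finite fun i => by
    by_contra hi
    exact h ⟨hx₀, i, hi⟩
  obtain ⟨r, hr, hrt⟩ := Metric.mem_nhdsWithin_iff.1 ht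
  exact ⟨L, r, hr, fun i => (hL i).mono (by rwa [inter_comm])⟩

lemma exists_le_dist_of_notMem_SigmaTilde {K : Set (Xs d)} {f : Fin n → Xs d → Ys m}
    {x₀ : Xs d} {y₀ : Ys m} (h : y₀ ∉ SigmaTilde K f x₀) :
    ∃ ε > 0, ∀ x ∈ ball x₀ ε ∩ K, ∀ z ∈ Sigma0 f x, ε ≤ dist z y₀ := by
  have h' : (x₀, y₀) ∉ closure {q : Xs d × Ys m | q.1 ∈ K ∧ q.2 ∈ Sigma0 f q.1} := h
  rw [Metric.mem_closure_iff] at h'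
  push Not at h'
  obtain ⟨ε, hε, hsep⟩ := h'
  refine ⟨ε, hε, fun x hx z hz => ?_⟩
  have hq := hsep (x, z) ⟨hx.2, hz⟩
  rw [Prod.dist_eq, le_max_iff] at hq
  rcases hq with hx' | hz'
  · exact absurd (mem_ball'.1 hx.1) hx'.not_gt
  · rwa [dist_comm] at hz'

theorem exists_lipschitzOnWith_selector [Nonempty (Fin n)] {K : Set (Xs d)}
    {f : Fin n → Xs d → Ys m} {P : Ys m → Xs d → Ys m} (hP : IsPrioritySelector f P)
    {p : Zs m d} {r D : ℝ} {L : ℝ≥0} (hr : 0 < r) (hD : 0 ≤ D)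
    (hLip : ∀ i, LipschitzOnWith L (f i) (closure K ∩ ball (projX p) r))
    (hest : ∀ x ∈ closure K ∩ ball (projX p) r, ∀ y ∈ ball (projY p) (r / 2), ∀ i j,
      ‖f i x - f j x‖ * (r / 2) ≤
        D * ((‖y - f i x‖ - nearestDist (f · x) y) + (‖y - f j x‖ - nearestDist (f · x) y))) :
    ∃ C : ℝ≥0, LipschitzOnWith C (fun q => P (projY q) (projX q))
      ({q | projX q ∈ closure K} ∩ ball p (r / 2)) := by
  have hC : 0 ≤ (L : ℝ) + 4 * D * (1 + L) / r := by positivity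
  refine ⟨Real.toNNReal (L + 4 * D * (1 + L) / r),
    LipschitzOnWith.of_dist_le_mul fun q hq q' hq' => ?_⟩
  rw [Real.coe_toNNReal _ hC]
  have hxr : ∀ q ∈ {q | projX q ∈ closure K} ∩ ball p (r / 2),
      projX q ∈ closure K ∩ ball (projX p) r := fun q hq =>
    ⟨hq.1, (dist_projX_le q p).trans_lt (hq.2.trans_le (half_le_self hr.le))⟩
  have hy' : projY q' ∈ ball (projY p) (r / 2) := (dist_projY_le q' p).trans_lt hq'.2
  set x := projX q
  set x' := projX q'
  set y' := projY q'
  obtain ⟨j, hPj, hj, -⟩ := hP (projY q) x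
  obtain ⟨k, hPk, hk, -⟩ := hP y' x'
  rw [hPj, hPk]
  have hmove : ∀ i, ‖f i x - f i x'‖ ≤ L * dist q q' := fun i => by
    rw [← dist_eq_norm]
    exact ((hLip i).dist_le_mul _ (hxr q hq) _ (hxr q' hq')).trans
      (mul_le_mul_of_nonneg_left (dist_projX_le q q') L.2)
  have hgap_j : ‖y' - f j x'‖ - nearestDist (f · x') y' ≤ 2 * (dist q q' + L * dist q q') :=
    norm_sub_sub_nearestDist_le (g := (f · x)) (g' := (f · x')) hj
      (by rw [← dist_eq_norm]; exact dist_projY_le q q') hmove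
  have hgap_k : ‖y' - f k x'‖ - nearestDist (f · x') y' = 0 := by
    rw [nearestDist_eq_of_forall_le hk, sub_self]
  have hjk : ‖f j x' - f k x'‖ * (r / 2) ≤ D * (2 * (dist q q' + L * dist q q')) := by
    refine (hest x' (hxr q' hq') y' hy' j k).trans ?_
    rw [hgap_k, add_zero]
    exact mul_le_mul_of_nonneg_left hgap_j hD
  have hjk' : ‖f j x' - f k x'‖ ≤ 4 * D * (1 + L) / r * dist q q' := by
    rw [div_mul_eq_mul_div, le_div_iff₀ hr]
    linarith
  calc dist (f j x) (f k x') ≤ ‖f j x - f j x'‖ + ‖f j x' - f k x'‖ := by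
        rw [dist_eq_norm]; exact norm_sub_le_norm_sub_add_norm_sub _ _ _
    _ ≤ L * dist q q' + 4 * D * (1 + L) / r * dist q q' := add_le_add (hmove j) hjk'
    _ = (L + 4 * D * (1 + L) / r) * dist q q' := by ring

theorem statement8_general {d m n : ℕ}
    (K : Set (Xs d))
    (f : Fin n → Xs d → Ys m)
    (P : Ys m → Xs d → Ys m) (hP : IsPrioritySelector f P) :
    LocLipOn ({p : Zs m d | projX p ∈ closure K} \ BadSet K f)
      (fun p => P (projY p) (projX p)) := by
  rintro p ⟨hpK, hpB⟩
  have : Nonempty (Fin n) := ⟨(hP 0 0).choose⟩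
  obtain ⟨hpD, hpSigma⟩ : projX p ∉ DSet K f ∧ projY p ∉ SigmaTilde K f (projX p) := by
    have hpB' : ¬ ((projX p ∈ DSet K f ∨ projX p ∈ closure (Unstable K f)) ∨
        projY p ∈ SigmaTilde K f (projX p)) := hpB
    exact ⟨fun h => hpB' (.inl (.inl h)), fun h => hpB' (.inr h)⟩
  obtain ⟨L, r₁, hr₁, hLip⟩ := exists_lipschitzOnWith_ball_of_notMem_DSet hpK hpD
  obtain ⟨r₂, hr₂, hsep⟩ := exists_le_dist_of_notMem_SigmaTilde hpSigma
  set r := min r₁ r₂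
  have hr : 0 < r := lt_min hr₁ hr₂
  have hball : ball (projX p) r ⊆ ball (projX p) r₁ := ball_subset_ball (min_le_left _ _)
  have hLip' := fun i => (hLip i).mono (inter_subset_inter_right _ hball)
  obtain ⟨D, hD, hest⟩ := exists_norm_sub_mul_le_gap hpK hr hLip' fun x hx z hz =>
    (min_le_right _ _).trans (hsep x ⟨ball_subset_ball (min_le_right _ _) hx.1, hx.2⟩ z hz)
  obtain ⟨C, hC⟩ := exists_lipschitzOnWith_selector hP hr hD hLip' hest
  exact ⟨C, _, inter_mem_nhdsWithin _ (ball_mem_nhds p (half_pos hr)),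
    hC.mono fun q hq => ⟨hq.1.1, hq.2⟩⟩

/-- The joint nearest selector `P(y, x) := P_y(x)` is locally
Lipschitz on `(Y × closure K) \ ℬ`. -/
theorem statement8 {d m n : ℕ}
    (K : Set (Xs d)) (hK : IsBounded K)
    (f : Fin n → Xs d → Ys m) (hf : ∀ i, LocLipOn K (f i))
    (hext : IsLimitExtension K f)
    (P : Ys m → Xs d → Ys m) (hP : IsPrioritySelector f P) :
    LocLipOn ({p : Zs m d | projX p ∈ closure K} \ BadSet K f)
      (fun p => P (projY p) (projX p)) :=
  statement8_general K f P hP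

end Bif
end
end

section
/- For every R > 0 and every s > 0, the safe-set profiles are finite: H₁(R, s) < ∞ and H₂(R, s) < ∞. -/
open Filter Topology MeasureTheory Set Metric Bornology RealInnerProductSpace
open scoped ENNReal NNReal

noncomputable section

/-!
On the safe tube `s ≤ ω ≤ ρ`, so the base points of the tube stay at distance `s` from `𝒟`.
They form a compact subset of `closure K` near which all branches are bounded and uniformly
Lipschitz at some scale `r`; this bounds `H₂`, and `H₁` on pairs at distance `≥ r`.

For close pairs, the selected branch can only jump near a switching point. If `y` is at distance
`≥ c` from the Voronoi switching set of values `v`, and `v i` is nearest to `y`, then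
`‖v i - v j‖ * 2c ≤ ‖y - v j‖² - ‖y - v i‖²`: walking from `y` towards `v j`, the first tie of
`v i` with a different value comes after a step of length at most the right side over
`2‖v i - v j‖`. At points of `closure K \ K` this survives as a limit from `K`, since `ℬ` contains
the closure of the switching graph. Moving `x` to `z` changes all distances by `O(L‖x - z‖)`, so the
selected values at `x` and `z` differ by `O(‖x - z‖)`.
-/

section Voronoi

variable {ι E : Type*} [NormedAddCommGroup E]

lemma norm_sub_mul_le_of_gap {v w : ι → E} {y : E} {i j : ι} {c ε : ℝ} (hc : 0 ≤ c)
    (hgap : ‖v i - v j‖ * (2 * c) ≤ ‖y - v j‖ ^ 2 - ‖y - v i‖ ^ 2)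
    (hj : ∀ k, ‖y - w j‖ ≤ ‖y - w k‖) (hvw : ∀ k, ‖v k - w k‖ ≤ ε) :
    ‖v i - w j‖ * (2 * c) ≤ 2 * ε * (c + 2 * ‖y - v i‖ + 2 * ε) := by
  have hε : 0 ≤ ε := (norm_nonneg _).trans (hvw i)
  have hvj : ‖y - v j‖ ≤ ‖y - v i‖ + 2 * ε := by
    linarith [norm_sub_le_norm_sub_add_norm_sub y (w j) (v j), norm_sub_rev (w j) (v j), hvw j,
      hj i, norm_sub_le_norm_sub_add_norm_sub y (v i) (w i), hvw i]
  have htri := norm_sub_le_norm_sub_add_norm_sub (v i) (v j) (w j)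
  nlinarith [hvw j, norm_nonneg (y - v j)]

variable [Fintype ι]

def voronoiSwitch (v : ι → E) : Set E :=
  {y | ∃ i j, v i ≠ v j ∧ ‖y - v i‖ = ‖y - v j‖ ∧ ∀ k, ‖y - v i‖ ≤ ‖y - v k‖}

def nearestDist [Nonempty ι] (v : ι → E) (y : E) : ℝ :=
  Finset.univ.inf' Finset.univ_nonempty fun k => ‖y - v k‖

lemma nearestDist_eq [Nonempty ι] {v : ι → E} {y : E} {i : ι}
    (hi : ∀ k, ‖y - v i‖ ≤ ‖y - v k‖) : nearestDist v y = ‖y - v i‖ :=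
  le_antisymm (Finset.inf'_le _ (Finset.mem_univ i)) (Finset.le_inf' _ _ fun k _ => hi k)

variable [InnerProductSpace ℝ E]

/-- Walking from `y` in the direction `v j - v i` until `v i` ties with another value of `v`
(at the latest when `v i` and `v j` tie) reaches a switching point. -/
lemma exists_mem_voronoiSwitch_near {v : ι → E} {y : E} {i j : ι}
    (hi : ∀ k, ‖y - v i‖ ≤ ‖y - v k‖) (hij : v i ≠ v j) :
    ∃ y' ∈ voronoiSwitch v, ‖y' - y‖ * (2 * ‖v i - v j‖) ≤ ‖y - v j‖ ^ 2 - ‖y - v i‖ ^ 2 := by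
  classical
  set e := v j - v i
  have he : 0 < ‖e‖ := norm_pos_iff.2 (sub_ne_zero.2 hij.symm)
  have hsq : ∀ (t : ℝ) k, ‖y + t • e - v k‖ ^ 2 - ‖y + t • e - v i‖ ^ 2
      = ‖y - v k‖ ^ 2 - ‖y - v i‖ ^ 2 + 2 * t * ⟪v i - v k, e⟫ := by
    intro t k
    have hshift : ∀ z, y + t • e - z = (y - z) + t • e := fun z => by abel
    rw [hshift, hshift, norm_add_sq_real, norm_add_sq_real, inner_smul_right, inner_smul_right,
      inner_sub_left, inner_sub_left, inner_sub_left]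
    ring
  set τ := (‖y - v j‖ ^ 2 - ‖y - v i‖ ^ 2) / (2 * ‖e‖ ^ 2)
  have hτ : 0 ≤ τ := div_nonneg (by nlinarith [hi j, norm_nonneg (y - v i)]) (by positivity)
  have htie : ‖y + τ • e - v j‖ = ‖y + τ • e - v i‖ := by
    refine (pow_left_inj₀ (norm_nonneg _) (norm_nonneg _) two_ne_zero).1 (sub_eq_zero.1 ?_)
    rw [hsq, ← neg_sub (v j) (v i), inner_neg_left, real_inner_self_eq_norm_sq]
    simp only [τ]
    field_simp
    ring
  set S := Finset.univ.filter fun k => v k ≠ v i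
  have hS : S.Nonempty := ⟨j, by simpa [S] using hij.symm⟩
  set h : ℝ → ℝ := fun t => S.inf' hS fun k => ‖y + t • e - v k‖ - ‖y + t • e - v i‖
  have hh : Continuous h := Continuous.finset_inf'_apply hS fun k _ => by fun_prop
  have h0 : 0 ≤ h 0 := Finset.le_inf' _ _ fun k _ => by simpa using hi k
  have hτ0 : h τ ≤ 0 :=
    (Finset.inf'_le _ (by simpa [S] using hij.symm)).trans (by rw [htie, sub_self])
  obtain ⟨t, ⟨ht0, htτ⟩, hht⟩ := intermediate_value_Icc' hτ hh.continuousOn ⟨hτ0, h0⟩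
  obtain ⟨k, hkS, hk⟩ :=
    Finset.exists_mem_eq_inf' hS fun k => ‖y + t • e - v k‖ - ‖y + t • e - v i‖
  have hnear : ∀ l, ‖y + t • e - v i‖ ≤ ‖y + t • e - v l‖ := by
    intro l
    by_cases hl : v l = v i
    · rw [hl]
    · have : h t ≤ _ := Finset.inf'_le (fun k => ‖y + t • e - v k‖ - ‖y + t • e - v i‖)
        (show l ∈ S by simpa [S] using hl)
      linarith
  refine ⟨y + t • e, ⟨i, k, fun hik => (Finset.mem_filter.1 hkS).2 hik.symm, ?_, hnear⟩, ?_⟩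
  · have : h t = _ := hk
    linarith
  · rw [add_sub_cancel_left, norm_smul, Real.norm_of_nonneg ht0, norm_sub_rev (v i)]
    calc t * ‖e‖ * (2 * ‖e‖) ≤ τ * ‖e‖ * (2 * ‖e‖) := by gcongr
      _ = ‖y - v j‖ ^ 2 - ‖y - v i‖ ^ 2 := by
        simp only [τ]
        field_simp

lemma gap_le_of_voronoiSwitch_far [Nonempty ι] {v : ι → E} {y : E} {c : ℝ} (hc : 0 ≤ c)
    (hfar : ∀ y' ∈ voronoiSwitch v, c ≤ ‖y' - y‖) (i j : ι) :
    ‖v i - v j‖ * (2 * c) ≤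
      (‖y - v i‖ ^ 2 - nearestDist v y ^ 2) + (‖y - v j‖ ^ 2 - nearestDist v y ^ 2) := by
  obtain ⟨a, -, ha⟩ := Finset.exists_mem_eq_inf' Finset.univ_nonempty fun k => ‖y - v k‖
  have hmin : ∀ k, ‖y - v a‖ ≤ ‖y - v k‖ := fun k => ha ▸ Finset.inf'_le _ (Finset.mem_univ k)
  have key : ∀ k, ‖v a - v k‖ * (2 * c) ≤ ‖y - v k‖ ^ 2 - ‖y - v a‖ ^ 2 := by
    intro k
    by_cases hak : v a = v k
    · simp [hak]
    obtain ⟨y', hy', hle⟩ := exists_mem_voronoiSwitch_near hmin hak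
    nlinarith [hfar y' hy', norm_nonneg (v a - v k)]
  have htri : ‖v i - v j‖ ≤ ‖v a - v i‖ + ‖v a - v j‖ :=
    norm_sub_rev (v a) (v i) ▸ norm_sub_le_norm_sub_add_norm_sub _ _ _
  rw [nearestDist_eq hmin]
  nlinarith [key i, key j]

/-- The switching points over base points `x' ∈ K` near `x` stay at distance about `c` from `y`,
so the estimate of `gap_le_of_voronoiSwitch_far` holds near `x` and passes to the limit. -/
lemma gap_le_of_switchGraph_far [Nonempty ι] {X : Type*} [PseudoMetricSpace X] {K : Set X}
    {f : ι → X → E} {x : X} (hx : x ∈ closure K) (hf : ∀ k, Tendsto (f k) (𝓝[K] x) (𝓝 (f k x)))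
    {y : E} {c : ℝ} (hc : 0 ≤ c)
    (hfar : ∀ x' ∈ K, ∀ y' ∈ voronoiSwitch (f · x'), c ^ 2 ≤ ‖y' - y‖ ^ 2 + dist x' x ^ 2)
    (i j : ι) :
    ‖f i x - f j x‖ * (2 * c) ≤ (‖y - f i x‖ ^ 2 - nearestDist (f · x) y ^ 2) +
      (‖y - f j x‖ ^ 2 - nearestDist (f · x) y ^ 2) := by
  have := mem_closure_iff_nhdsWithin_neBot.1 hx
  have hc' : Tendsto (fun x' => √(c ^ 2 - dist x' x ^ 2)) (𝓝[K] x) (𝓝 c) := by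
    have : Continuous fun x' => √(c ^ 2 - dist x' x ^ 2) := by fun_prop
    simpa [Real.sqrt_sq hc] using (this.tendsto x).mono_left nhdsWithin_le_nhds
  have hdist : ∀ k, Tendsto (fun x' => ‖y - f k x'‖) (𝓝[K] x) (𝓝 ‖y - f k x‖) :=
    fun k => (tendsto_const_nhds.sub (hf k)).norm
  have hnear : Tendsto (fun x' => nearestDist (f · x') y) (𝓝[K] x) (𝓝 (nearestDist (f · x) y)) :=
    Tendsto.finset_inf'_nhds_apply _ fun k _ => hdist k
  refine le_of_tendsto_of_tendsto (((hf i).sub (hf j)).norm.mul (hc'.const_mul 2))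
    ((((hdist i).pow 2).sub (hnear.pow 2)).add (((hdist j).pow 2).sub (hnear.pow 2))) ?_
  filter_upwards [self_mem_nhdsWithin] with x' hx'
  refine gap_le_of_voronoiSwitch_far (v := (f · x')) (Real.sqrt_nonneg _) (fun y' hy' => ?_) i j
  exact Real.sqrt_le_left (norm_nonneg _) |>.2 (by linarith [hfar x' hx' y' hy'])

end Voronoi

section Compactness

variable {α β ι : Type*} [PseudoMetricSpace α] [PseudoMetricSpace β] [Finite ι]

lemma LipschitzOnWith.continuousWithinAt_of_mem_nhdsWithin {g : α → β} {C : ℝ≥0} {S t : Set α}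
    {x : α} (hg : LipschitzOnWith C g t) (hx : x ∈ S) (ht : t ∈ 𝓝[S] x) :
    ContinuousWithinAt g S x :=
  (hg.continuousOn x (mem_of_mem_nhdsWithin hx ht)).mono_of_mem_nhdsWithin ht

/-- A Lebesgue number of a finite cover of `T` by balls on which all `g k` are Lipschitz. -/
lemma exists_lipschitz_near_of_isCompact {S T : Set α} {g : ι → α → β} (hT : IsCompact T)
    (hTS : T ⊆ S) (hg : ∀ x ∈ T, ∀ k, ∃ C : ℝ≥0, ∃ t ∈ 𝓝[S] x, LipschitzOnWith C (g k) t) :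
    ∃ r > 0, ∃ L : ℝ≥0, ∀ k, ∀ p ∈ T, ∀ q ∈ S, dist p q < r →
      dist (g k p) (g k q) ≤ L * dist p q := by
  have hloc : ∀ x ∈ T, ∃ C : ℝ≥0, ∃ ε > 0, ∀ k, LipschitzOnWith C (g k) (ball x ε ∩ S) := by
    intro x hx
    choose C t ht hlip using hg x hx
    obtain ⟨ε, hε, hsub⟩ := Metric.mem_nhdsWithin_iff.1 (Filter.iInter_mem.2 ht)
    exact ⟨⨆ k, C k, ε, hε, fun k => ((hlip k).mono (hsub.trans (iInter_subset _ k))).weaken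
      (le_ciSup (Set.finite_range C).bddAbove k)⟩
  choose! C ε hε hCε using hloc
  obtain ⟨F, hFT, hcov⟩ :=
    hT.elim_nhds_subcover (fun x => ball x (ε x)) fun x hx => ball_mem_nhds x (hε x hx)
  obtain ⟨δ, hδ, hδF⟩ := lebesgue_number_lemma_of_metric hT (c := fun a : F => ball (a : α) (ε a))
    (fun _ => isOpen_ball) fun p hp => by
      obtain ⟨a, ha, hpa⟩ := mem_iUnion₂.1 (hcov hp)
      exact mem_iUnion.2 ⟨⟨a, ha⟩, hpa⟩
  refine ⟨δ, hδ, F.sup C, fun k p hp q hq hpq => ?_⟩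
  obtain ⟨⟨a, ha⟩, hball⟩ := hδF p hp
  exact ((hCε a (hFT a ha) k).weaken (F.le_sup ha)).dist_le_mul p
    ⟨hball (mem_ball_self hδ), hTS hp⟩ q ⟨hball (mem_ball'.2 hpq), hq⟩

lemma IsCompact.exists_bound_of_forall_continuousOn {E : Type*} [SeminormedAddGroup E]
    {T : Set α} {g : ι → α → E} (hT : IsCompact T) (hg : ∀ k, ContinuousOn (g k) T) :
    ∃ M, ∀ k, ∀ x ∈ T, ‖g k x‖ ≤ M := by
  choose M hM using fun k => hT.exists_bound_of_continuousOn (hg k)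
  obtain ⟨M₀, hM₀⟩ := Finite.exists_le M
  exact ⟨M₀, fun k x hx => (hM k x hx).trans (hM₀ k)⟩

end Compactness

lemma le_max_div_mul_of_le_of_near {a t M A r : ℝ} (ha : 0 ≤ a) (ht : 0 ≤ t) (hr : 0 < r)
    (hM : a ≤ M) (hnear : t < r → a ≤ A * t) : a ≤ max (M / r) A * t := by
  rcases lt_or_ge t r with htr | hrt
  · exact (hnear htr).trans (by gcongr; exact le_max_right _ _)
  · have : 0 ≤ M / r := div_nonneg (ha.trans hM) hr.le
    calc a ≤ M / r * r := by rwa [div_mul_cancel₀ _ hr.ne']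
      _ ≤ max (M / r) A * t := by gcongr; exact le_max_left _ _

namespace Bif

section SafeTube

variable {K : Set (Xs d)} {f : Fin n → Xs d → Ys m} {P : Ys m → Xs d → Ys m} {R s : ℝ}
  {y : Ys m} {x : Xs d}

lemma dist_ptYX_sq (y y' : Ys m) (x x' : Xs d) :
    dist (ptYX y x) (ptYX y' x') ^ 2 = dist y y' ^ 2 + dist x x' ^ 2 := by
  rw [WithLp.prod_dist_eq_of_L2, Real.sq_sqrt (by positivity)]
  rfl

lemma dist_ptYX_same_left (y : Ys m) (x x' : Xs d) : dist (ptYX y x) (ptYX y x') = dist x x' := by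
  rw [← sq_eq_sq₀ dist_nonneg dist_nonneg, dist_ptYX_sq, dist_self]
  ring

lemma ptYX_mem_BadSet_of_mem_DSet (y : Ys m) (hx : x ∈ DSet K f) : ptYX y x ∈ BadSet K f :=
  Or.inl (Or.inl hx)

lemma ptYX_mem_BadSet_of_mem_Sigma0 (hx : x ∈ K) (hy : y ∈ Sigma0 f x) : ptYX y x ∈ BadSet K f :=
  Or.inr (subset_closure ⟨hx, hy⟩)

lemma le_dist_of_mem_STube (h : (y, x) ∈ STube K f R s) {b : Zs m d} (hb : b ∈ BadSet K f) :
    s ≤ dist (ptYX y x) b := by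
  have hρ : 0 ≤ rhoB K f y x := infDist_nonneg
  calc s ≤ omegaB K f y x := h.2.2
    _ ≤ rhoB K f y x := div_le_self hρ (by linarith)
    _ ≤ dist (ptYX y x) b := infDist_le_dist_of_mem hb

lemma switchGraph_far_of_mem_STube (hs : 0 < s) (h : (y, x) ∈ STube K f R s) :
    ∀ x' ∈ K, ∀ y' ∈ voronoiSwitch (f · x'), s ^ 2 ≤ ‖y' - y‖ ^ 2 + dist x' x ^ 2 := by
  intro x' hx' y' hy'
  calc s ^ 2 ≤ dist (ptYX y x) (ptYX y' x') ^ 2 :=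
        pow_le_pow_left₀ hs.le (le_dist_of_mem_STube h (ptYX_mem_BadSet_of_mem_Sigma0 hx' hy')) 2
    _ = ‖y' - y‖ ^ 2 + dist x' x ^ 2 := by rw [dist_ptYX_sq, dist_comm y, dist_eq_norm, dist_comm x]

def goodSet (K : Set (Xs d)) (f : Fin n → Xs d → Ys m) (s : ℝ) : Set (Xs d) :=
  {x ∈ closure K | ∀ z ∈ DSet K f, s ≤ dist x z}

lemma goodSet_subset_closure : goodSet K f s ⊆ closure K := fun _ hx => hx.1

lemma isCompact_goodSet (hK : IsBounded K) : IsCompact (goodSet K f s) := by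
  have hT : goodSet K f s = closure K ∩ ⋂ z ∈ DSet K f, {x | s ≤ dist x z} := by
    ext x
    simp [goodSet]
  refine isCompact_of_isClosed_isBounded ?_ (hK.closure.subset goodSet_subset_closure)
  rw [hT]
  exact isClosed_closure.inter
    (isClosed_biInter fun z _ => isClosed_le continuous_const (by fun_prop))

lemma mem_goodSet_of_mem_STube (h : (y, x) ∈ STube K f R s) : x ∈ goodSet K f s :=
  ⟨h.1, fun z hz =>
    dist_ptYX_same_left y x z ▸ le_dist_of_mem_STube h (ptYX_mem_BadSet_of_mem_DSet y hz)⟩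

lemma exists_lipschitzOnWith_of_mem_goodSet (hs : 0 < s) (hx : x ∈ goodSet K f s) (k : Fin n) :
    ∃ C : ℝ≥0, ∃ t ∈ 𝓝[closure K] x, LipschitzOnWith C (f k) t := by
  by_contra hk
  have := hx.2 x ⟨hx.1, k, hk⟩
  rw [dist_self] at this
  linarith

lemma gap_le_of_mem_STube [Nonempty (Fin n)] (hs : 0 < s) (h : (y, x) ∈ STube K f R s)
    (hcont : ∀ k, ContinuousWithinAt (f k) (closure K) x) {i : Fin n}
    (hi : ∀ k, ‖y - f i x‖ ≤ ‖y - f k x‖) (j : Fin n) :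
    ‖f i x - f j x‖ * (2 * s) ≤ ‖y - f j x‖ ^ 2 - ‖y - f i x‖ ^ 2 := by
  have := gap_le_of_switchGraph_far h.1 (fun k => (hcont k).mono subset_closure) hs.le
    (switchGraph_far_of_mem_STube hs h) i j
  rw [nearestDist_eq hi] at this
  linarith

lemma bddAbove_H2set (hP : IsPrioritySelector f P) {M : ℝ}
    (hM : ∀ y x, (y, x) ∈ STube K f R s → ∀ k, ‖f k x‖ ≤ M) : BddAbove (H2set K f P R s) := by
  refine ⟨M, ?_⟩
  rintro _ ⟨y, x, hx, rfl⟩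
  obtain ⟨i, hPi, -⟩ := hP y x
  exact hPi ▸ hM y x hx i

lemma bddAbove_H1set (hP : IsPrioritySelector f P) (hs : 0 < s) {r M : ℝ} {L : ℝ≥0} (hr : 0 < r)
    (hM : ∀ y x, (y, x) ∈ STube K f R s → ∀ k, ‖f k x‖ ≤ M)
    (hL : ∀ y x z, (y, x) ∈ STube K f R s → (y, z) ∈ STube K f R s → dist x z < r →
      ∀ k, dist (f k x) (f k z) ≤ L * dist x z)
    (hgap : ∀ y x, (y, x) ∈ STube K f R s → ∀ i, (∀ k, ‖y - f i x‖ ≤ ‖y - f k x‖) →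
      ∀ j, ‖f i x - f j x‖ * (2 * s) ≤ ‖y - f j x‖ ^ 2 - ‖y - f i x‖ ^ 2) :
    BddAbove (H1set K f P R s) := by
  refine ⟨max (2 * M / r) (L * (s + 2 * (R + M) + 2 * L * r) / s), ?_⟩
  rintro _ ⟨y, x, z, hx, hz, hxz, rfl⟩
  have ht : 0 < ‖x - z‖ := norm_pos_iff.2 (sub_ne_zero.2 hxz)
  obtain ⟨i, hPi, hi, -⟩ := hP y x
  obtain ⟨j, hPj, hj, -⟩ := hP y z
  rw [div_le_iff₀ ht, hPi, hPj]
  refine le_max_div_mul_of_le_of_near (norm_nonneg _) ht.le hr ?_ fun hnear => ?_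
  · linarith [norm_sub_le (f i x) (f j z), hM y x hx i, hM y z hz j]
  · have hε := norm_sub_mul_le_of_gap hs.le (hgap y x hx i hi j) hj fun k => by
      simpa only [dist_eq_norm] using hL y x z hx hz (by rwa [dist_eq_norm]) k
    have hyi : ‖y - f i x‖ ≤ R + M := (norm_sub_le _ _).trans (add_le_add hx.2.1 (hM y x hx i))
    rw [div_mul_eq_mul_div, le_div_iff₀ hs]
    nlinarith [mul_nonneg L.coe_nonneg ht.le, mul_le_mul_of_nonneg_left hnear.le L.coe_nonneg]

end SafeTube

theorem statement9_general {d m n : ℕ}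
    (K : Set (Xs d)) (hK : IsBounded K)
    (f : Fin n → Xs d → Ys m)
    (P : Ys m → Xs d → Ys m) (hP : IsPrioritySelector f P) :
    ∀ R : ℝ, 0 < R → ∀ s : ℝ, 0 < s →
      BddAbove (H1set K f P R s) ∧ BddAbove (H2set K f P R s) := by
  intro R _ s hs
  have : Nonempty (Fin n) := ⟨(hP 0 0).choose⟩
  have hT : IsCompact (goodSet K f s) := isCompact_goodSet hK
  have hlip := fun x (hx : x ∈ goodSet K f s) => exists_lipschitzOnWith_of_mem_goodSet hs hx
  have hcont : ∀ k, ∀ x ∈ goodSet K f s, ContinuousWithinAt (f k) (closure K) x := fun k x hx => by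
    obtain ⟨C, t, ht, hC⟩ := hlip x hx k
    exact hC.continuousWithinAt_of_mem_nhdsWithin hx.1 ht
  obtain ⟨r, hr, L, hL⟩ := exists_lipschitz_near_of_isCompact hT goodSet_subset_closure hlip
  obtain ⟨M, hM⟩ := hT.exists_bound_of_forall_continuousOn fun k x hx =>
    (hcont k x hx).mono goodSet_subset_closure
  have hM' : ∀ y x, (y, x) ∈ STube K f R s → ∀ k, ‖f k x‖ ≤ M :=
    fun y x hx k => hM k x (mem_goodSet_of_mem_STube hx)
  refine ⟨bddAbove_H1set hP hs hr hM'
    (fun y x z hx hz hxz k => hL k x (mem_goodSet_of_mem_STube hx) z hz.1 hxz)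
    (fun y x hx i hi j => gap_le_of_mem_STube hs hx
      (fun k => hcont k x (mem_goodSet_of_mem_STube hx)) hi j),
    bddAbove_H2set hP hM'⟩

/-- For every `R > 0` and `s > 0`, the safe-set profiles are finite:
the sets defining `H₁(R, s)` and `H₂(R, s)` are bounded above. -/
theorem statement9 {d m n : ℕ}
    (K : Set (Xs d)) (hK : IsBounded K)
    (f : Fin n → Xs d → Ys m) (hf : ∀ i, LocLipOn K (f i))
    (hext : IsLimitExtension K f)
    (P : Ys m → Xs d → Ys m) (hP : IsPrioritySelector f P) :
    ∀ R : ℝ, 0 < R → ∀ s : ℝ, 0 < s →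
      BddAbove (H1set K f P R s) ∧ BddAbove (H2set K f P R s) :=
  statement9_general K hK f P hP

end Bif
end
end

section
/- For every x ∈ K \ 𝒰, the graph-closure switching set agrees with the reduced switching set: Σ̃(x) = Σ°(x). -/
open Filter Topology MeasureTheory Set Metric Bornology RealInnerProductSpace
open scoped ENNReal NNReal

noncomputable section

namespace Bif

variable {d m n : ℕ}

/-! Near a stable point `x`, two branches that differ anywhere in `K` already differ at `x`, so the
finitely many pieces of the graph of `Σ°` (one per pair of branches) that reach `x` all belong to
pairs that are still separated at `x`. Each piece is cut out by non-strict inequalities between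
distances to the branches, which are continuous at `x`, so its closure over `x` stays in the
corresponding Voronoi face at `x`. -/

theorem LocLipOn.continuousOn {α β : Type*} [PseudoEMetricSpace α] [PseudoEMetricSpace β]
    {s : Set α} {g : α → β} (hg : LocLipOn s g) : ContinuousOn g s := fun x hx => by
  obtain ⟨C, t, ht, hlip⟩ := hg x hx
  exact (hlip.continuousOn x (mem_of_mem_nhdsWithin hx ht)).mono_of_mem_nhdsWithin ht

section VoronoiFace

variable {X E ι : Type*} [TopologicalSpace X] [SeminormedAddCommGroup E]

def voronoiFace (f : ι → X → E) (x : X) (i j : ι) : Set E :=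
  {y | ‖y - f i x‖ = ‖y - f j x‖ ∧ ∀ k, ‖y - f i x‖ ≤ ‖y - f k x‖}

theorem mem_voronoiFace_of_mem_closure {f : ι → X → E} {K : Set X} {x : X} {y : E} {i j : ι}
    (hf : ∀ k, ContinuousWithinAt (f k) K x)
    (h : (x, y) ∈ closure {p : X × E | p.1 ∈ K ∧ p.2 ∈ voronoiFace f p.1 i j}) :
    y ∈ voronoiFace f x i j := by
  set A := {p : X × E | p.1 ∈ K ∧ p.2 ∈ voronoiFace f p.1 i j}
  have hdist : ∀ k, ContinuousWithinAt (fun p : X × E => ‖p.2 - f k p.1‖) A (x, y) := fun k =>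
    (continuousWithinAt_snd.sub ((hf k).comp continuousWithinAt_fst fun _ hp => hp.1)).norm
  refine ⟨le_antisymm ?_ ?_, fun k => ?_⟩
  · exact (hdist i).closure_le h (hdist j) fun p hp => hp.2.1.le
  · exact (hdist j).closure_le h (hdist i) fun p hp => hp.2.1.ge
  · exact (hdist i).closure_le h (hdist k) fun p hp => hp.2.2 k

theorem exists_mem_voronoiFace_of_mem_closure [Finite ι] {f : ι → X → E} {K : Set X} {x : X}
    {y : E} (hf : ∀ k, ContinuousWithinAt (f k) K x)
    (hsep : ∀ᶠ x' in 𝓝[K] x, ∀ i j, f i x' ≠ f j x' → f i x ≠ f j x)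
    (h : (x, y) ∈ closure
      {p : X × E | p.1 ∈ K ∧ ∃ i j, f i p.1 ≠ f j p.1 ∧ p.2 ∈ voronoiFace f p.1 i j}) :
    ∃ i j, f i x ≠ f j x ∧ y ∈ voronoiFace f x i j := by
  obtain ⟨u, hu, hxu, huK⟩ := mem_nhdsWithin.mp hsep
  set piece : ι → ι → Set (X × E) := fun i j =>
    {p | p.1 ∈ u ∩ K ∧ f i p.1 ≠ f j p.1 ∧ p.2 ∈ voronoiFace f p.1 i j}
  have hlocal : (x, y) ∈ closure (⋃ i, ⋃ j, piece i j) := by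
    refine closure_mono ?_ ((hu.prod isOpen_univ).inter_closure ⟨⟨hxu, trivial⟩, h⟩)
    rintro p ⟨⟨hpu, -⟩, hpK, i, j, hne, hp⟩
    exact mem_iUnion₂.mpr ⟨i, j, ⟨hpu, hpK⟩, hne, hp⟩
  simp only [closure_iUnion_of_finite, mem_iUnion] at hlocal
  obtain ⟨i, j, hij⟩ := hlocal
  obtain ⟨p, hpuK, hne, -⟩ := closure_nonempty_iff.mp (nonempty_of_mem hij)
  refine ⟨i, j, huK hpuK i j hne, mem_voronoiFace_of_mem_closure hf ?_⟩
  refine closure_mono ?_ hij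
  exact fun q hq => ⟨hq.1.2, hq.2.2⟩

end VoronoiFace

theorem StableAt.eventually_ne_imp_ne {K : Set (Xs d)} {f : Fin n → Xs d → Ys m} {x : Xs d}
    (h : StableAt K f x) (hx : x ∈ K) :
    ∀ᶠ x' in 𝓝[K] x, ∀ i j, f i x' ≠ f j x' → f i x ≠ f j x := by
  obtain ⟨U, hU, -, R, -, hR⟩ := h
  filter_upwards [hU] with x' hx' i j hne heq
  exact hne ((hR x' hx' i j).mpr ((hR x (mem_of_mem_nhdsWithin hx hU) i j).mp heq))

theorem statement12_general {d m n : ℕ}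
    (K : Set (Xs d))
    (f : Fin n → Xs d → Ys m) (hf : ∀ i, LocLipOn K (f i)) :
    ∀ x ∈ K \ Unstable K f, SigmaTilde K f x = Sigma0 f x := by
  rintro x ⟨hxK, hxU⟩
  have hstable : StableAt K f x := of_not_not fun h => hxU ⟨hxK, h⟩
  refine Subset.antisymm (fun y hy => ?_) fun y hy => subset_closure ⟨hxK, hy⟩
  exact exists_mem_voronoiFace_of_mem_closure (fun k => (hf k).continuousOn x hxK)
    (hstable.eventually_ne_imp_ne hxK) hy

/-- For every stable input `x ∈ K \ 𝒰`, the graph-closure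
switching set agrees with the reduced switching set: `Σ̃(x) = Σ°(x)`. -/
theorem statement12 {d m n : ℕ}
    (K : Set (Xs d)) (hK : IsBounded K)
    (f : Fin n → Xs d → Ys m) (hf : ∀ i, LocLipOn K (f i)) :
    ∀ x ∈ K \ Unstable K f, SigmaTilde K f x = Sigma0 f x :=
  statement12_general K f hf

end Bif
end
end

section
/- Fix x ∈ K \ 𝒰 and y₀ ∈ Y \ Σ°(x), and set u = P_{y₀}(x). Then for every point z on the line segment [y₀, u] joining y₀ and u, one has P_z(x) = u. In particular, [y₀, u] ∩ Σ̃(x) = ∅. -/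
open Filter Topology MeasureTheory Set Metric Bornology RealInnerProductSpace
open scoped ENNReal NNReal

noncomputable section

namespace Bif

variable {d m n : ℕ}

/-- Voronoi-segment invariance: for `x ∈ K \ 𝒰`, `y₀ ∉ Σ°(x)`,
and `u = P_{y₀}(x)`, every `z` on the segment `[y₀, u]` satisfies `P_z(x) = u`;
in particular the segment does not meet `Σ̃(x)`. -/
theorem statement13 {d m n : ℕ}
    (K : Set (Xs d)) (hK : IsBounded K)
    (f : Fin n → Xs d → Ys m) (hf : ∀ i, LocLipOn K (f i))
    (P : Ys m → Xs d → Ys m) (hP : IsPrioritySelector f P)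
    (x : Xs d) (hx : x ∈ K \ Unstable K f)
    (y0 : Ys m) (hy0 : y0 ∉ Sigma0 f x) :
    (∀ z ∈ segment ℝ y0 (P y0 x), P z x = P y0 x) ∧
    segment ℝ y0 (P y0 x) ∩ SigmaTilde K f x = ∅ := by
  classical
  obtain ⟨hxK, hxU⟩ := hx
  obtain ⟨i0, hPu, hmin0, -⟩ := hP y0 x
  -- strict minimality at y0
  have hstrict0 : ∀ k, f k x ≠ f i0 x → ‖y0 - f i0 x‖ < ‖y0 - f k x‖ := by
    intro k hk
    rcases lt_or_eq_of_le (hmin0 k) with h | h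
    · exact h
    · exact absurd ⟨i0, k, fun h' => hk h'.symm, h, hmin0⟩ hy0
  -- strict minimality along the segment
  have hgapz : ∀ z ∈ segment ℝ y0 (f i0 x), ∀ k, f k x ≠ f i0 x →
      ‖z - f i0 x‖ < ‖z - f k x‖ := by
    intro z hz k hk
    obtain ⟨a, b, ha, hb, hab, hzeq⟩ := hz
    have hzu : z - f i0 x = a • (y0 - f i0 x) := by
      rw [← hzeq]
      match_scalars <;> linarith
    have hy0z : y0 - z = b • (y0 - f i0 x) := by
      rw [← hzeq]
      match_scalars <;> linarith
    have h1 : ‖z - f i0 x‖ = a * ‖y0 - f i0 x‖ := by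
      rw [hzu, norm_smul, Real.norm_of_nonneg ha]
    have h2 : ‖y0 - z‖ = b * ‖y0 - f i0 x‖ := by
      rw [hy0z, norm_smul, Real.norm_of_nonneg hb]
    have h3 : ‖y0 - f k x‖ ≤ ‖y0 - z‖ + ‖z - f k x‖ := by
      have := norm_add_le (y0 - z) (z - f k x)
      simpa using this
    have h4 := hstrict0 k hk
    nlinarith [norm_nonneg (y0 - f i0 x)]
  have hPzseg : ∀ z ∈ segment ℝ y0 (f i0 x), P z x = f i0 x := by
    intro z hz
    obtain ⟨j, hPj, hminj, -⟩ := hP z x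
    by_cases hj : f j x = f i0 x
    · rw [hPj, hj]
    · exact absurd (hminj i0) (not_le.mpr (hgapz z hz j hj))
  rw [hPu]
  refine ⟨hPzseg, ?_⟩
  -- stability at x
  have hstab : StableAt K f x := by
    by_contra h
    exact hxU ⟨hxK, h⟩
  obtain ⟨U, hU, hUK, R, hR, hiff⟩ := hstab
  have hxmemU : x ∈ U := mem_of_mem_nhdsWithin hxK hU
  have hcont : ∀ k, ContinuousWithinAt (f k) K x := by
    intro k
    obtain ⟨C, t, ht, hlip⟩ := hf k x hxK
    have hxt : x ∈ t := mem_of_mem_nhdsWithin hxK ht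
    exact (hlip.continuousOn.continuousWithinAt hxt).mono_of_mem_nhdsWithin ht
  rw [Set.eq_empty_iff_forall_notMem]
  rintro z ⟨hzseg, hzS⟩
  -- gap ε along the segment point z
  obtain ⟨ε, hε, hgapε⟩ :
      ∃ ε > 0, ∀ k, f k x ≠ f i0 x → ‖z - f i0 x‖ + ε ≤ ‖z - f k x‖ := by
    by_cases hall : ∀ k, f k x = f i0 x
    · exact ⟨1, one_pos, fun k hk => absurd (hall k) hk⟩
    · push_neg at hall
      set s : Finset (Fin n) := Finset.univ.filter (fun k => f k x ≠ f i0 x) with hs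
      have hsne : s.Nonempty := by
        obtain ⟨k, hk⟩ := hall; exact ⟨k, by simp [hs, hk]⟩
      refine ⟨s.inf' hsne (fun k => ‖z - f k x‖ - ‖z - f i0 x‖), ?_, ?_⟩
      · rw [gt_iff_lt, Finset.lt_inf'_iff]
        intro k hk
        have hkne : f k x ≠ f i0 x := by simpa [hs] using hk
        linarith [hgapz z hzseg k hkne]
      · intro k hk
        have hks : k ∈ s := by simp [hs, hk]
        linarith [Finset.inf'_le (fun k => ‖z - f k x‖ - ‖z - f i0 x‖) hks]
  have hε4 : (0:ℝ) < ε / 4 := by positivity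
  -- a relative neighborhood controlling all branches
  have hWk : ∀ k : Fin n, {x' | dist (f k x') (f k x) < ε / 4} ∈ 𝓝[K] x := by
    intro k
    exact (hcont k) (Metric.ball_mem_nhds (f k x) hε4)
  have hWall : (U ∩ ⋂ k, {x' | dist (f k x') (f k x) < ε / 4}) ∈ 𝓝[K] x :=
    Filter.inter_mem hU ((Filter.iInter_mem).mpr hWk)
  -- extract a sequence from the closure
  have hcl : (x, z) ∈ closure {p : Xs d × Ys m | p.1 ∈ K ∧ p.2 ∈ Sigma0 f p.1} := hzS
  rw [mem_closure_iff_seq_limit] at hcl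
  obtain ⟨p, hpS, hplim⟩ := hcl
  have h1t : Tendsto (fun ℓ => (p ℓ).1) atTop (𝓝 x) :=
    (continuous_fst.tendsto (x, z)).comp hplim
  have h2t : Tendsto (fun ℓ => (p ℓ).2) atTop (𝓝 z) :=
    (continuous_snd.tendsto (x, z)).comp hplim
  have h1K : Tendsto (fun ℓ => (p ℓ).1) atTop (𝓝[K] x) :=
    tendsto_nhdsWithin_of_tendsto_nhds_of_eventually_within _ h1t
      (Eventually.of_forall fun ℓ => (hpS ℓ).1)
  have hev1 : ∀ᶠ ℓ in atTop,
      (p ℓ).1 ∈ U ∩ ⋂ k, {x' | dist (f k x') (f k x) < ε / 4} := h1K hWall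
  have hev2 : ∀ᶠ ℓ in atTop, dist (p ℓ).2 z < ε / 4 :=
    h2t (Metric.ball_mem_nhds z hε4)
  obtain ⟨ℓ, hℓ1, hℓ2⟩ := (hev1.and hev2).exists
  set x' := (p ℓ).1 with hx'
  set y' := (p ℓ).2 with hy'
  have hxU' : x' ∈ U := hℓ1.1
  have hball : ∀ k, ‖f k x' - f k x‖ < ε / 4 := by
    intro k
    have := Set.mem_iInter.mp hℓ1.2 k
    simpa [dist_eq_norm] using this
  have hy'z : ‖y' - z‖ < ε / 4 := by
    simpa [dist_eq_norm] using hℓ2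
  obtain ⟨i, j, hij, heq, hle⟩ := (hpS ℓ).2
  have hijx : f i x ≠ f j x := fun h =>
    hij ((hiff x' hxU' i j).mpr ((hiff x hxmemU i j).mp h))
  obtain ⟨k0, hk0ne, hk0le⟩ :
      ∃ k0, f k0 x ≠ f i0 x ∧ ∀ k, ‖y' - f k0 x'‖ ≤ ‖y' - f k x'‖ := by
    by_cases hi : f i x = f i0 x
    · refine ⟨j, fun h => hijx (hi.trans h.symm), fun k => ?_⟩
      rw [← heq]; exact hle k
    · exact ⟨i, hi, hle⟩
  have key : ‖y' - f k0 x'‖ ≤ ‖y' - f i0 x'‖ := hk0le i0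
  have e1 : ‖y' - f i0 x'‖ ≤ ‖y' - z‖ + ‖z - f i0 x‖ + ‖f i0 x - f i0 x'‖ := by
    have h : y' - f i0 x' = (y' - z) + (z - f i0 x) + (f i0 x - f i0 x') := by abel
    rw [h]
    exact norm_add₃_le
  have e2 : ‖z - f k0 x‖ ≤ ‖z - y'‖ + ‖y' - f k0 x'‖ + ‖f k0 x' - f k0 x‖ := by
    have h : z - f k0 x = (z - y') + (y' - f k0 x') + (f k0 x' - f k0 x) := by abel
    rw [h]
    exact norm_add₃_le
  have hr1 : ‖z - y'‖ = ‖y' - z‖ := norm_sub_rev _ _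
  have hr2 : ‖f i0 x - f i0 x'‖ = ‖f i0 x' - f i0 x‖ := norm_sub_rev _ _
  have hgap := hgapε k0 hk0ne
  have hb1 := hball i0
  have hb2 := hball k0
  linarith

end Bif
end
end
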